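/- arXiv:1902.00747 — 2 statements merged into one kernel-verified Lean document; each statement's English description precedes it below -/
import Mathlib

section
/- Every complete bipartite graph K_{n_1,n_2} (n_1, n_2 ≥ 1) is S-determined: every graph with the same Seidel spectrum as K_{n_1,n_2} is switching equivalent to a graph isomorphic to K_{n_1,n_2}. -/
open Polynomial Matrix Finset SimpleGraph

/- The Seidel matrix `S(G) = J - I - 2A(G)` of a simple graph `G`. -/
open scoped Classical in
noncomputable def seidelMatrix {V : Type*} [Fintype V] [DecidableEq V]
    (G : SimpleGraph V) : Matrix V V ℝ :=
  (Matrix.of fun _ _ => (1 : ℝ)) - 1 - 2 • G.adjMatrix ℝ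

open scoped Classical in
lemma seidelMatrix_apply {V : Type*} [Fintype V] [DecidableEq V] (G : SimpleGraph V) (i j : V) :
    seidelMatrix G i j = if i = j then 0 else if G.Adj i j then -1 else 1 := by
  classical
  simp only [seidelMatrix, Matrix.sub_apply, Matrix.of_apply, Matrix.one_apply,
    Matrix.smul_apply, SimpleGraph.adjMatrix_apply]
  by_cases h : i = j
  · subst h; simp
  · by_cases ha : G.Adj i j <;> simp [h, ha] <;> norm_num

lemma seidelMatrix_isHermitian {V : Type*} [Fintype V] [DecidableEq V] (G : SimpleGraph V) :
    (seidelMatrix G).IsHermitian := by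
  ext i j
  simp only [Matrix.conjTranspose_apply, star_trivial, seidelMatrix_apply]
  rw [G.adj_comm]
  by_cases h : i = j <;> simp [h, eq_comm]

lemma eval_charpoly' {m : Type*} [Fintype m] [DecidableEq m] (M : Matrix m m ℝ) (μ : ℝ) :
    M.charpoly.eval μ = (μ • (1 : Matrix m m ℝ) - M).det := by
  rw [Matrix.charpoly, ← Polynomial.coe_evalRingHom, RingHom.map_det]
  congr 1
  ext i j
  by_cases h : i = j <;>
    simp [Matrix.charmatrix_apply, Matrix.map_apply, Matrix.one_apply, Matrix.diagonal_apply, h]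

open scoped Classical in
lemma seidel_structure {W : Type} [Fintype W] [DecidableEq W] (H : SimpleGraph W)
    (n : ℕ) (hn : Fintype.card W = n)
    (hp : (seidelMatrix H + 1) * (seidelMatrix H - ((n : ℝ) - 1) • 1) = 0)
    (w₀ : W) :
    ∃ v : W → ℝ, (∀ w, v w = 1 ∨ v w = -1) ∧
      ∀ i j, seidelMatrix H i j = v i * v j - (1 : Matrix W W ℝ) i j := by
  set M := seidelMatrix H + 1 with hM
  have key : M * M = (n : ℝ) • M := by
    have e : M * M - (n : ℝ) • M = M * (seidelMatrix H - ((n : ℝ) - 1) • 1) := by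
      simp only [hM, mul_add, add_mul, mul_sub, sub_mul, mul_one, one_mul, mul_smul_comm,
        smul_mul_assoc, smul_add, smul_sub]
      module
    rw [hp] at e
    exact sub_eq_zero.mp e
  have hMpm : ∀ i j, M i j = 1 ∨ M i j = -1 := by
    intro i j
    simp only [hM, Matrix.add_apply, Matrix.one_apply, seidelMatrix_apply]
    by_cases h : i = j
    · simp [h]
    · by_cases ha : H.Adj i j <;> simp [h, ha]
  have hM1 : ∀ i, M i i = 1 := by
    intro i; simp [hM, Matrix.add_apply, Matrix.one_apply, seidelMatrix_apply]
  have hsym : ∀ i j, M i j = M j i := by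
    intro i j
    by_cases h : i = j
    · rw [h]
    · have h' : ¬ j = i := fun hh => h hh.symm
      simp only [hM, Matrix.add_apply, Matrix.one_apply, seidelMatrix_apply, if_neg h, if_neg h']
      rw [H.adj_comm]
  have hsum : ∀ i j, ∑ k, M i k * M k j = (n : ℝ) * M i j := by
    intro i j
    have := congrFun (congrFun key i) j
    simpa [Matrix.mul_apply, Matrix.smul_apply] using this
  have hterm : ∀ i j k, M i k * M k j = M i j := by
    intro i j k
    have h0 : ∑ l, (M i j - M i l * M l j) = 0 := by
      rw [Finset.sum_sub_distrib, hsum i j, Finset.sum_const, Finset.card_univ, hn]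
      simp [nsmul_eq_mul]
    have hpm : ∀ l, M i l * M l j = 1 ∨ M i l * M l j = -1 := by
      intro l
      rcases hMpm i l with a | a <;> rcases hMpm l j with b | b <;> rw [a, b] <;> norm_num
    rcases hMpm i j with h | h
    · have := (Finset.sum_eq_zero_iff_of_nonneg (fun l _ => by
        rcases hpm l with b | b <;> rw [h, b] <;> norm_num)).mp h0 k (Finset.mem_univ k)
      linarith [this]
    · have := (Finset.sum_eq_zero_iff_of_nonpos (fun l _ => by
        rcases hpm l with b | b <;> rw [h, b] <;> norm_num)).mp h0 k (Finset.mem_univ k)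
      linarith [this]
  refine ⟨fun w => M w w₀, fun w => hMpm w w₀, fun i j => ?_⟩
  have hSij : seidelMatrix H i j = M i j - (1 : Matrix W W ℝ) i j := by simp [hM]
  rw [hSij, ← hterm i j w₀, hsym w₀ j]

open scoped Classical in
lemma seidel_annihilator {V : Type} [Fintype V] [DecidableEq V] (G : SimpleGraph V)
    (ε : V → ℝ) (hε : ∀ u, ε u * ε u = 1)
    (hSG : ∀ u v, seidelMatrix G u v = if u = v then 0 else ε u * ε v) :
    (seidelMatrix G + 1) * (seidelMatrix G - ((Fintype.card V : ℝ) - 1) • 1) = 0 := by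
  ext u v
  simp only [Matrix.mul_apply, Matrix.add_apply, Matrix.sub_apply, Matrix.smul_apply,
    Matrix.one_apply, Matrix.zero_apply, hSG, smul_eq_mul]
  have hA : ∀ w, ((if u = w then (0:ℝ) else ε u * ε w) + (if u = w then 1 else 0))
      = ε u * ε w := by
    intro w
    by_cases h : u = w
    · rw [if_pos h, if_pos h, h]; linarith [hε w]
    · rw [if_neg h, if_neg h, add_zero]
  have hB : ∀ w, ((if w = v then (0:ℝ) else ε w * ε v)
        - ((Fintype.card V : ℝ) - 1) * (if w = v then 1 else 0))
      = ε w * ε v - (if w = v then (Fintype.card V : ℝ) else 0) := by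
    intro w
    by_cases h : w = v
    · rw [if_pos h, if_pos h, h, if_pos rfl]; linarith [hε v]
    · rw [if_neg h, if_neg h, if_neg h]; ring
  have hrw : ∀ w, ((if u = w then (0:ℝ) else ε u * ε w) + (if u = w then 1 else 0)) *
      ((if w = v then (0:ℝ) else ε w * ε v)
        - ((Fintype.card V : ℝ) - 1) * (if w = v then 1 else 0))
      = (ε u * ε v) - (if w = v then (ε u * ε w) * (Fintype.card V : ℝ) else 0) := by
    intro w
    rw [hA, hB, mul_sub, mul_ite, mul_zero]
    congr 1
    linear_combination (ε u * ε v) * hε w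
  rw [Finset.sum_congr rfl (fun w _ => hrw w), Finset.sum_sub_distrib, Finset.sum_const,
    Finset.card_univ, Finset.sum_ite_eq' Finset.univ v fun w => (ε u * ε w) * (Fintype.card V : ℝ)]
  simp only [Finset.mem_univ, if_pos, nsmul_eq_mul]
  linear_combination (Fintype.card V : ℝ) * ε u * hε v - (Fintype.card V : ℝ) * hε v * ε u

lemma ann_transfer {W m : Type} [Fintype W] [DecidableEq W] [Fintype m] [DecidableEq m]
    {A : Matrix W W ℝ} (hA : A.IsHermitian) (N : Matrix m m ℝ) (c : ℝ)
    (hchar : A.charpoly = N.charpoly)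
    (hN : (N + 1) * (N - c • 1) = 0) :
    (A + 1) * (A - c • 1) = 0 := by
  have hroot : ∀ i : W, (hA.eigenvalues i + 1) * (hA.eigenvalues i - c) = 0 := by
    intro i
    set μ := hA.eigenvalues i with hμ
    have hb := hA.mulVec_eigenvectorBasis i
    have hbne : (⇑(hA.eigenvectorBasis i) : W → ℝ) ≠ 0 := by
      have hnz := hA.eigenvectorBasis.orthonormal.ne_zero i
      intro hc
      exact hnz (by ext j; exact congrFun hc j)
    have hdetA : (μ • (1 : Matrix W W ℝ) - A).det = 0 := by
      rw [← Matrix.exists_mulVec_eq_zero_iff]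
      refine ⟨_, hbne, ?_⟩
      rw [Matrix.sub_mulVec, Matrix.smul_mulVec, Matrix.one_mulVec, hb, sub_self]
    have hdetN : (μ • (1 : Matrix m m ℝ) - N).det = 0 := by
      have h1 := eval_charpoly' A μ
      rw [hchar, eval_charpoly' N μ] at h1
      rw [h1]; exact hdetA
    obtain ⟨x, hx0, hx⟩ := Matrix.exists_mulVec_eq_zero_iff.mpr hdetN
    have hNx : N *ᵥ x = μ • x := by
      rw [Matrix.sub_mulVec, Matrix.smul_mulVec, Matrix.one_mulVec, sub_eq_zero] at hx
      exact hx.symm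
    have h1 : (N - c • 1) *ᵥ x = (μ - c) • x := by
      rw [Matrix.sub_mulVec, hNx, Matrix.smul_mulVec, Matrix.one_mulVec, sub_smul]
    have h2 : ((N + 1) * (N - c • 1)) *ᵥ x = ((μ + 1) * (μ - c)) • x := by
      rw [← Matrix.mulVec_mulVec, h1, Matrix.mulVec_smul, Matrix.add_mulVec, hNx,
        Matrix.one_mulVec]
      module
    rw [hN, Matrix.zero_mulVec] at h2
    exact ((smul_eq_zero.mp h2.symm).resolve_right hx0)
  have hspec := hA.spectral_theorem
  set U := (hA.eigenvectorUnitary : Matrix W W ℝ) with hUdef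
  have hUs : U * star U = 1 := Matrix.mem_unitaryGroup_iff.mp hA.eigenvectorUnitary.2
  have hsU : star U * U = 1 := Matrix.mem_unitaryGroup_iff'.mp hA.eigenvectorUnitary.2
  set D : Matrix W W ℝ := Matrix.diagonal hA.eigenvalues with hDdef
  have hspec' : A = U * D * star U := by
    simpa [RCLike.ofReal_real_eq_id] using hspec
  have hc1 : c • (1 : Matrix W W ℝ) = Matrix.diagonal (fun _ => c) := by
    ext i j
    by_cases h : i = j <;> simp [Matrix.diagonal_apply, Matrix.one_apply, h]
  have hdiag : (D + 1) * (D - c • 1) = 0 := by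
    rw [hDdef, hc1, ← Matrix.diagonal_one, Matrix.diagonal_add, Matrix.diagonal_sub,
      Matrix.diagonal_mul_diagonal]
    ext i j
    by_cases h : i = j
    · subst h
      simpa using hroot i
    · simp [Matrix.diagonal_apply_ne _ h]
  have e1 : U * (D + 1) * star U = A + 1 := by
    rw [mul_add, mul_one, add_mul, hUs, ← hspec']
  have e2 : U * (D - c • 1) * star U = A - c • 1 := by
    rw [mul_sub, mul_smul_comm, mul_one, sub_mul, Matrix.smul_mul, hUs, ← hspec']
  have assoc : (U * (D + 1) * star U) * (U * (D - c • 1) * star U)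
      = U * ((D + 1) * (D - c • 1)) * star U := by
    have h' : (U * (D + 1) * star U) * (U * (D - c • 1) * star U)
        = U * (D + 1) * (star U * U) * ((D - c • 1) * star U) := by noncomm_ring
    rw [h', hsU, mul_one]
    noncomm_ring
  rw [← e1, ← e2, assoc, hdiag, mul_zero, zero_mul]

/-- Two graphs on the same vertex set are switching equivalent iff their Seidel
matrices are conjugate by a diagonal `±1` matrix. -/
def SwitchingEquiv {V : Type*} [Fintype V] [DecidableEq V]
    (G H : SimpleGraph V) : Prop :=
  ∃ ε : V → ℝ, (∀ v, ε v = 1 ∨ ε v = -1) ∧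
    seidelMatrix H = Matrix.diagonal ε * seidelMatrix G * Matrix.diagonal ε

/-- A graph `G` is determined, up to switching, by its Seidel spectrum
(`S`-determined) if every graph with the same Seidel spectrum is switching
equivalent to a graph isomorphic to `G`. -/
def SDetermined {V : Type} [Fintype V] [DecidableEq V] (G : SimpleGraph V) : Prop :=
  ∀ (W : Type) [Fintype W] [DecidableEq W] (H : SimpleGraph W),
    (seidelMatrix H).charpoly = (seidelMatrix G).charpoly →
    ∃ H' : SimpleGraph W, SwitchingEquiv H H' ∧ Nonempty (H' ≃g G)

/-- **Theorem.** Every complete bipartite graph `K_{n_1,n_2}` (`n_1, n_2 ≥ 1`) is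
determined, up to switching, by its Seidel spectrum. -/
theorem sDetermined_completeBipartite (n₁ n₂ : ℕ) (h₁ : 1 ≤ n₁) (h₂ : 1 ≤ n₂) :
    SDetermined (completeMultipartiteGraph fun i : Fin 2 => Fin (![n₁, n₂] i)) := by
  classical
  intro W _ _ H hchar
  set K := completeMultipartiteGraph fun i : Fin 2 => Fin (![n₁, n₂] i) with hK
  have hcardV : Fintype.card ((i : Fin 2) × Fin (![n₁, n₂] i)) = n₁ + n₂ := by
    simp [Fintype.card_sigma, Fin.sum_univ_two]
  have hcardW : Fintype.card W = n₁ + n₂ := by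
    have ha := Matrix.charpoly_natDegree_eq_dim (seidelMatrix H)
    have hb := Matrix.charpoly_natDegree_eq_dim (seidelMatrix K)
    rw [hchar, hb] at ha
    omega
  set ε : ((i : Fin 2) × Fin (![n₁, n₂] i)) → ℝ := fun u => if u.1 = 0 then 1 else -1 with hεdef
  have hεpm : ∀ u, ε u = 1 ∨ ε u = -1 := fun u => by
    by_cases h : u.1 = 0 <;> simp [hεdef, h]
  have hε2 : ∀ u, ε u * ε u = 1 := fun u => by
    rcases hεpm u with a | a <;> rw [a] <;> norm_num
  have hSK : ∀ u v, seidelMatrix K u v = if u = v then 0 else ε u * ε v := by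
    intro u v
    rw [seidelMatrix_apply]
    by_cases h : u = v
    · rw [if_pos h, if_pos h]
    · rw [if_neg h, if_neg h]
      have hadj : K.Adj u v ↔ u.1 ≠ v.1 := by simp [hK]
      by_cases hf : u.1 = v.1
      · rw [if_neg (fun ha => (hadj.mp ha) hf)]
        by_cases h0 : u.1 = 0
        · simp [hεdef, h0, hf ▸ h0]
        · have h0' : ¬ v.1 = 0 := fun hh => h0 (hf ▸ hh)
          simp [hεdef, h0, h0']
      · rw [if_pos (hadj.mpr hf)]
        by_cases h0 : u.1 = 0
        · have h0' : ¬ v.1 = 0 := fun hh => hf (h0.trans hh.symm)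
          simp [hεdef, h0, h0']
        · have h0' : v.1 = 0 := by
            have hu1 : u.1 = 1 := by omega
            have := (v.1).isLt
            omega
          simp [hεdef, h0, h0']
  have hpK : (seidelMatrix K + 1) * (seidelMatrix K - (((n₁ + n₂ : ℕ) : ℝ) - 1) • 1) = 0 := by
    have h := seidel_annihilator K ε hε2 hSK
    rwa [hcardV] at h
  have hpH : (seidelMatrix H + 1) * (seidelMatrix H - (((n₁ + n₂ : ℕ) : ℝ) - 1) • 1) = 0 :=
    ann_transfer (seidelMatrix_isHermitian H) (seidelMatrix K) _ hchar hpK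
  have hW : Nonempty W := by
    rw [← Fintype.card_pos_iff, hcardW]; omega
  obtain ⟨w₀⟩ := hW
  obtain ⟨v, hv, hSH⟩ := seidel_structure H (n₁ + n₂) hcardW hpH w₀
  have e : W ≃ (i : Fin 2) × Fin (![n₁, n₂] i) := Fintype.equivOfCardEq (by rw [hcardW, hcardV])
  refine ⟨K.comap e.toEmbedding, ⟨fun w => ε (e w) * v w, fun w => ?_, ?_⟩,
    ⟨SimpleGraph.Iso.comap e K⟩⟩
  · rcases hεpm (e w) with a | a <;> rcases hv w with b | b <;> simp [a, b]
  · ext i j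
    rw [Matrix.mul_diagonal, Matrix.diagonal_mul, hSH i j, seidelMatrix_apply]
    by_cases h : i = j
    · rw [if_pos h]
      subst h
      rw [Matrix.one_apply_eq]
      rcases hv i with b | b <;> rw [b] <;> ring
    · rw [if_neg h]
      have he : e i ≠ e j := fun hh => h (e.injective hh)
      have h1 : (1 : Matrix W W ℝ) i j = 0 := Matrix.one_apply_ne h
      rw [h1]
      have hadj : (K.comap e.toEmbedding).Adj i j ↔ K.Adj (e i) (e j) := Iff.rfl
      have t1 := hSK (e i) (e j)
      rw [if_neg he, seidelMatrix_apply, if_neg he] at t1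
      by_cases ha : K.Adj (e i) (e j)
      · rw [if_pos (hadj.mpr ha), if_pos ha] at *
        rcases hv i with b | b <;> rcases hv j with c | c <;> rw [b, c] <;>
          linear_combination t1
      · rw [if_neg (fun hh => ha (hadj.mp hh)), if_neg ha] at *
        rcases hv i with b | b <;> rcases hv j with c | c <;> rw [b, c] <;>
          linear_combination t1
end

section
/- Let n_1 ≥ n_2 ≥ ⋯ ≥ n_k ≥ 1 and let λ_1 ≥ λ_2 ≥ ⋯ ≥ λ_{k−1} be the positive Seidel eigenvalues (with multiplicity) of the complete k-partite graph K_{n_1,…,n_k}. Then 2n_{i+1} − 1 ≤ λ_i ≤ 2n_i − 1 for every i = 1,…,k−1; in particular 2n_k − 1 ≤ λ_{k−1} ≤ ⋯ ≤ 2n_2 − 1 ≤ λ_1 ≤ 2n_1 − 1. -/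
/-!
The Seidel matrix of `K_{n_1,…,n_k}` is `2B - J - I`, where `B` is the all-ones matrix on each
part, so its quadratic form is `2 ∑_p (∑_{v ∈ V_p} x_v)² - (∑_v x_v)² - ‖x‖²`.
For `λ_i ≤ 2n_i - 1`: on the vectors summing to zero on each of the (at most `i - 1`) parts larger
than `n_i`, Cauchy–Schwarz on the other parts bounds the form by `(2n_i - 1)‖x‖²`, and this
subspace has codimension at most `i - 1`.
For `2n_{i+1} - 1 ≤ λ_i`: on the vectors `x = c ∘ part` vanishing on the parts smaller than
`n_{i+1}` with `∑_v x_v = 0`, the form is `∑_p (2n_p - 1) n_p c_p² ≥ (2n_{i+1} - 1)‖x‖²`, and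
these vectors form a subspace of dimension at least `i`, since at least `i + 1` parts are left.
A subspace on which the form is `≤ t‖x‖²` (resp. `≥ t‖x‖²`) meets the span of the eigenvectors
with eigenvalue `> t` (resp. `< t`) only in `0`, which turns these dimensions into eigenvalue
counts.
-/

open Matrix Finset SimpleGraph

open Module
open scoped RealInnerProductSpace

lemma Module.Basis.exists_mem_ne_zero_repr_eq_zero {ι K V : Type*} [Fintype ι] [Field K]
    [AddCommGroup V] [Module K V] (b : Basis ι K V) (s : Finset ι) (W : Submodule K V)
    (h : Fintype.card ι < #s + finrank K W) :
    ∃ x ∈ W, x ≠ 0 ∧ ∀ i ∉ s, b.repr x i = 0 := by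
  classical
  have : FiniteDimensional K V := Module.Finite.of_basis b
  let coords : W →ₗ[K] ({i // i ∉ s} → K) := LinearMap.pi fun i => (b.coord i).comp W.subtype
  have hdim : finrank K ({i // i ∉ s} → K) < finrank K W := by
    rw [finrank_fintype_fun_eq_card, Fintype.card_subtype_compl, Fintype.card_coe]
    have := s.card_le_univ
    omega
  obtain ⟨⟨x, hxW⟩, hx, hx0⟩ :=
    Submodule.exists_mem_ne_zero_of_ne_bot (LinearMap.ker_ne_bot_of_finrank_lt (f := coords) hdim)
  refine ⟨x, hxW, fun h => hx0 (by simp [h]), fun i hi => ?_⟩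
  simpa [coords] using congrFun (LinearMap.mem_ker.mp hx) ⟨i, hi⟩

lemma LinearMap.finrank_le_finrank_ker_add {K V₁ V₂ : Type*} [Field K] [AddCommGroup V₁]
    [Module K V₁] [AddCommGroup V₂] [Module K V₂] [FiniteDimensional K V₁] [FiniteDimensional K V₂]
    (f : V₁ →ₗ[K] V₂) : finrank K V₁ ≤ finrank K (ker f) + finrank K V₂ := by
  have := f.finrank_range_add_finrank_ker
  have := (range f).finrank_le
  omega

namespace OrthonormalBasis

variable {ι E : Type*} [Fintype ι] [NormedAddCommGroup E] [InnerProductSpace ℝ E]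
  {T : E →ₗ[ℝ] E} (b : OrthonormalBasis ι ℝ E) {μ : ι → ℝ}

lemma inner_apply_self_eq_sum_mul_repr_sq (hb : ∀ i, T (b i) = μ i • b i) (x : E) :
    ⟪T x, x⟫ = ∑ i, μ i * b.repr x i ^ 2 := by
  have hTx : T x = ∑ i, (μ i * b.repr x i) • b i := by
    conv_lhs => rw [← b.sum_repr x]
    simp only [map_sum, map_smul, hb, smul_smul, mul_comm]
  simp only [hTx, sum_inner, real_inner_smul_left, ← b.repr_apply_apply]
  exact Finset.sum_congr rfl fun i _ => by ring

lemma card_lt_add_finrank_le (hb : ∀ i, T (b i) = μ i • b i) {t : ℝ} (W : Submodule ℝ E)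
    (hW : ∀ x ∈ W, ⟪T x, x⟫ ≤ t * ‖x‖ ^ 2) :
    #{i | t < μ i} + finrank ℝ W ≤ Fintype.card ι := by
  by_contra! h
  obtain ⟨x, hxW, hx0, hx⟩ := b.toBasis.exists_mem_ne_zero_repr_eq_zero _ W h
  simp only [OrthonormalBasis.coe_toBasis_repr_apply, Finset.mem_filter, Finset.mem_univ, true_and,
    not_lt] at hx
  obtain ⟨j, hj⟩ : ∃ j, b.repr x j ≠ 0 := by
    by_contra! h0
    exact hx0 (b.repr.injective (by ext j; simp [h0]))
  have hpos : 0 < ∑ i, (μ i - t) * b.repr x i ^ 2 := by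
    refine Finset.sum_pos' (fun i _ => ?_) ⟨j, Finset.mem_univ j, ?_⟩
    · by_cases hi : t < μ i
      · have := sub_pos.2 hi; positivity
      · simp [hx i (not_lt.1 hi)]
    · have := sub_pos.2 (lt_of_not_ge fun hj' => hj (hx j hj'))
      positivity
  have hle := hW x hxW
  rw [b.inner_apply_self_eq_sum_mul_repr_sq hb, ← b.sum_sq_inner_right] at hle
  simp only [← b.repr_apply_apply, Finset.mul_sum, sub_mul, Finset.sum_sub_distrib] at hpos hle
  linarith

lemma finrank_le_card_le (hb : ∀ i, T (b i) = μ i • b i) {t : ℝ} (W : Submodule ℝ E)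
    (hW : ∀ x ∈ W, t * ‖x‖ ^ 2 ≤ ⟪T x, x⟫) :
    finrank ℝ W ≤ #{i | t ≤ μ i} := by
  have hneg : ∀ i, (-T) (b i) = (-μ i) • b i := fun i => by simp [hb]
  have hcount := b.card_lt_add_finrank_le hneg W (t := -t) fun x hx => by
    have := hW x hx
    simp only [LinearMap.neg_apply, inner_neg_left]
    linarith
  have hsplit := Finset.card_filter_add_card_filter_not (s := Finset.univ) fun i => t ≤ μ i
  simp only [neg_lt_neg_iff, not_le, Finset.card_univ] at hcount hsplit
  omega

end OrthonormalBasis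

namespace Matrix.IsHermitian

variable {n : Type*} [Fintype n] [DecidableEq n] {A : Matrix n n ℝ} (hA : A.IsHermitian)

lemma toEuclideanLin_eigenvectorBasis (i : n) :
    toEuclideanLin A (hA.eigenvectorBasis i) = hA.eigenvalues i • hA.eigenvectorBasis i := by
  simp [toLpLin_apply, hA.mulVec_eigenvectorBasis]

lemma card_eigenvalues_gt_add_finrank_le {t : ℝ} (W : Submodule ℝ (n → ℝ))
    (hW : ∀ x ∈ W, x ⬝ᵥ A *ᵥ x ≤ t * (x ⬝ᵥ x)) :
    #{i | t < hA.eigenvalues i} + finrank ℝ W ≤ Fintype.card n := by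
  have := hA.eigenvectorBasis.card_lt_add_finrank_le hA.toEuclideanLin_eigenvectorBasis
    (W.map (WithLp.linearEquiv 2 ℝ (n → ℝ)).symm.toLinearMap) (t := t) <| by
      rintro _ ⟨x, hx, rfl⟩
      rw [← real_inner_self_eq_norm_sq]
      exact hW x hx
  rwa [LinearEquiv.finrank_map_eq] at this

lemma finrank_le_card_eigenvalues_ge {t : ℝ} (W : Submodule ℝ (n → ℝ))
    (hW : ∀ x ∈ W, t * (x ⬝ᵥ x) ≤ x ⬝ᵥ A *ᵥ x) :
    finrank ℝ W ≤ #{i | t ≤ hA.eigenvalues i} := by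
  have := hA.eigenvectorBasis.finrank_le_card_le hA.toEuclideanLin_eigenvectorBasis
    (W.map (WithLp.linearEquiv 2 ℝ (n → ℝ)).symm.toLinearMap) (t := t) <| by
      rintro _ ⟨x, hx, rfl⟩
      rw [← real_inner_self_eq_norm_sq]
      exact hW x hx
  rwa [LinearEquiv.finrank_map_eq] at this

end Matrix.IsHermitian

namespace Antitone

variable {α : Type*} [LinearOrder α] {k : ℕ} {f : Fin k → α}

lemma card_filter_apply_lt_le (hf : Antitone f) (i : Fin k) : #{j | f i < f j} ≤ i := by
  calc #{j | f i < f j} ≤ #(Finset.Iio i) :=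
        Finset.card_le_card fun j hj => by
          simp only [Finset.mem_filter, Finset.mem_univ, true_and] at hj
          exact Finset.mem_Iio.2 (lt_of_not_ge fun hij => (hf hij).not_gt hj)
    _ = i := Fin.card_Iio i

lemma lt_card_filter_apply_le (hf : Antitone f) (i : Fin k) : (i : ℕ) < #{j | f i ≤ f j} := by
  calc (i : ℕ) < #(Finset.Iic i) := by rw [Fin.card_Iic]; omega
    _ ≤ #{j | f i ≤ f j} :=
        Finset.card_le_card fun j hj => by simpa using hf (Finset.mem_Iic.1 hj)

lemma apply_le_of_card_filter_lt_le (hf : Antitone f) {c : α} (i : Fin k)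
    (h : #{j | c < f j} ≤ i) : f i ≤ c := by
  by_contra! hc
  have := (hf.lt_card_filter_apply_le i).trans_le <|
    Finset.card_le_card (Finset.monotone_filter_right _ fun _ _ => hc.trans_le)
  omega

lemma le_apply_of_lt_card_filter_le (hf : Antitone f) {c : α} (i : Fin k)
    (h : (i : ℕ) < #{j | c ≤ f j}) : c ≤ f i := by
  by_contra! hc
  have := (Finset.card_le_card (Finset.monotone_filter_right _ fun _ _ => hc.trans_le)).trans
    (hf.card_filter_apply_lt_le i)
  omega

end Antitone

lemma card_filter_comp_eq_of_filter_map_eq {α β γ : Type*} [Fintype α] [Fintype β]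
    {f : α → γ} {g : β → γ} {q : γ → Prop} [DecidablePred q]
    (h : (Finset.univ.val.map f).filter q = Finset.univ.val.map g)
    (p : γ → Prop) [DecidablePred p] (hp : ∀ x, p x → q x) :
    #{a | p (f a)} = #{b | p (g b)} := by
  have := congrArg (Multiset.countP p) h
  rw [Multiset.countP_filter, Multiset.countP_map, Multiset.countP_map] at this
  simpa [Finset.card, Finset.filter_val, fun x => and_iff_left_of_imp (hp x)] using this

section CompleteMultipartite

variable {ι : Type*} [Fintype ι] {V : ι → Type*} [∀ i, Fintype (V i)]

lemma dotProduct_self_sigma (x : (Σ i, V i) → ℝ) : x ⬝ᵥ x = ∑ p, ∑ j, x ⟨p, j⟩ ^ 2 := by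
  simp only [dotProduct, Fintype.sum_sigma, sq]

variable [DecidableEq (Σ i, V i)]

lemma seidelMatrix_completeMultipartiteGraph_apply [DecidableEq ι] (u v : Σ i, V i) :
    seidelMatrix (completeMultipartiteGraph V) u v =
      (if u.1 = v.1 then 2 else 0) - 1 - (if u = v then 1 else 0) := by
  simp only [seidelMatrix, Matrix.sub_apply, of_apply, one_apply]
  by_cases huv : u = v
  · subst huv; norm_num
  · by_cases h : u.1 = v.1 <;> simp [huv, h] <;> norm_num

lemma seidelMatrix_completeMultipartiteGraph_mulVec_apply (x : (Σ i, V i) → ℝ) (u : Σ i, V i) :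
    (seidelMatrix (completeMultipartiteGraph V) *ᵥ x) u
      = 2 * ∑ j, x ⟨u.1, j⟩ - ∑ v, x v - x u := by
  classical
  simp only [mulVec, dotProduct, seidelMatrix_completeMultipartiteGraph_apply, sub_mul,
    Finset.sum_sub_distrib, ite_mul, zero_mul, one_mul, Fintype.sum_sigma, Finset.sum_ite_eq,
    Finset.mem_univ, if_true]
  rw [Finset.sum_eq_single u.1 (fun p _ hp => by simp [Ne.symm hp]) (by simp), Finset.mul_sum]
  simp

lemma dotProduct_seidelMatrix_completeMultipartiteGraph_mulVec (x : (Σ i, V i) → ℝ) :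
    x ⬝ᵥ seidelMatrix (completeMultipartiteGraph V) *ᵥ x
      = 2 * ∑ p, (∑ j, x ⟨p, j⟩) ^ 2 - (∑ u, x u) ^ 2 - x ⬝ᵥ x := by
  simp only [dotProduct, seidelMatrix_completeMultipartiteGraph_mulVec_apply, mul_sub,
    Finset.sum_sub_distrib, ← Finset.sum_mul, Fintype.sum_sigma]
  simp only [mul_left_comm _ (2 : ℝ), ← Finset.mul_sum]
  simp only [sq, Finset.sum_mul]

lemma dotProduct_seidelMatrix_completeMultipartiteGraph_mulVec_le (N : ℕ) (x : (Σ i, V i) → ℝ)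
    (hx : ∀ p, N < Fintype.card (V p) → ∑ j, x ⟨p, j⟩ = 0) :
    x ⬝ᵥ seidelMatrix (completeMultipartiteGraph V) *ᵥ x ≤ (2 * N - 1) * (x ⬝ᵥ x) := by
  have hpart : ∀ p, (∑ j, x ⟨p, j⟩) ^ 2 ≤ N * ∑ j, x ⟨p, j⟩ ^ 2 := by
    intro p
    rcases lt_or_ge N (Fintype.card (V p)) with hp | hp
    · rw [hx p hp, zero_pow two_ne_zero]; positivity
    · calc (∑ j, x ⟨p, j⟩) ^ 2 ≤ Fintype.card (V p) * ∑ j, x ⟨p, j⟩ ^ 2 :=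
            sq_sum_le_card_mul_sum_sq
        _ ≤ N * ∑ j, x ⟨p, j⟩ ^ 2 := by gcongr
  have hsum := Finset.sum_le_sum fun p (_ : p ∈ Finset.univ) => hpart p
  rw [← Finset.mul_sum, ← dotProduct_self_sigma] at hsum
  rw [dotProduct_seidelMatrix_completeMultipartiteGraph_mulVec]
  nlinarith [sq_nonneg (∑ u, x u)]

lemma le_dotProduct_seidelMatrix_completeMultipartiteGraph_mulVec (N : ℕ) (c : ι → ℝ)
    (hc : ∀ p, Fintype.card (V p) < N → c p = 0) (hsum : ∑ p, Fintype.card (V p) * c p = 0) :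
    (2 * N - 1) * ((c ∘ Sigma.fst : (Σ i, V i) → ℝ) ⬝ᵥ (c ∘ Sigma.fst)) ≤
      (c ∘ Sigma.fst) ⬝ᵥ seidelMatrix (completeMultipartiteGraph V) *ᵥ (c ∘ Sigma.fst) := by
  rw [dotProduct_seidelMatrix_completeMultipartiteGraph_mulVec, dotProduct_self_sigma,
    Fintype.sum_sigma]
  simp only [Function.comp_apply, Finset.sum_const, Finset.card_univ, nsmul_eq_mul, hsum,
    zero_pow two_ne_zero, sub_zero]
  rw [Finset.mul_sum, Finset.mul_sum, ← Finset.sum_sub_distrib]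
  refine Finset.sum_le_sum fun p _ => ?_
  rcases lt_or_ge (Fintype.card (V p)) N with hp | hp
  · simp [hc p hp]
  · have : (N : ℝ) ≤ Fintype.card (V p) := by exact_mod_cast hp
    nlinarith [mul_nonneg (Nat.cast_nonneg (Fintype.card (V p))) (sq_nonneg (c p))]

theorem card_seidelMatrix_completeMultipartiteGraph_eigenvalues_gt_le
    (hS : (seidelMatrix (completeMultipartiteGraph V)).IsHermitian) (N : ℕ) :
    #{u | 2 * N - 1 < hS.eigenvalues u} ≤ #{p | N < Fintype.card (V p)} := by
  let partSums : ((Σ i, V i) → ℝ) →ₗ[ℝ] ({p // N < Fintype.card (V p)} → ℝ) :=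
    LinearMap.pi fun p => ∑ j, LinearMap.proj ⟨p.1, j⟩
  have hrank := partSums.finrank_le_finrank_ker_add
  have hcount := hS.card_eigenvalues_gt_add_finrank_le (LinearMap.ker partSums) fun x hx =>
    dotProduct_seidelMatrix_completeMultipartiteGraph_mulVec_le N x fun p hp => by
      simpa [partSums] using congrFun (LinearMap.mem_ker.mp hx) ⟨p, hp⟩
  simp only [finrank_fintype_fun_eq_card, Fintype.card_subtype] at hrank
  omega

theorem card_le_card_seidelMatrix_completeMultipartiteGraph_eigenvalues_ge_add_one
    [∀ i, Nonempty (V i)] (hS : (seidelMatrix (completeMultipartiteGraph V)).IsHermitian)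
    (N : ℕ) : #{p | N ≤ Fintype.card (V p)} ≤ #{u | 2 * N - 1 ≤ hS.eigenvalues u} + 1 := by
  let constraints : (ι → ℝ) →ₗ[ℝ] ℝ × ({p // Fintype.card (V p) < N} → ℝ) :=
    (∑ p, (Fintype.card (V p) : ℝ) • LinearMap.proj p).prod
      (LinearMap.pi fun p => LinearMap.proj p.1)
  have hrank := constraints.finrank_le_finrank_ker_add
  have hinj : Function.Injective (LinearMap.funLeft ℝ ℝ (Sigma.fst : (Σ i, V i) → ι)) :=
    LinearMap.funLeft_injective_of_surjective _ _ _ fun p => ⟨⟨p, Classical.arbitrary _⟩, rfl⟩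
  have hcount := hS.finrank_le_card_eigenvalues_ge (t := 2 * N - 1)
    ((LinearMap.ker constraints).map (LinearMap.funLeft ℝ ℝ Sigma.fst)) <| by
      rintro _ ⟨c, hc, rfl⟩
      obtain ⟨hsum, hsupp⟩ :
          ∑ p, (Fintype.card (V p) : ℝ) * c p = 0 ∧ ∀ p, Fintype.card (V p) < N → c p = 0 := by
        simpa [constraints, Prod.ext_iff, funext_iff] using hc
      exact le_dotProduct_seidelMatrix_completeMultipartiteGraph_mulVec N c hsupp hsum
  rw [← LinearEquiv.finrank_eq (Submodule.equivMapOfInjective _ hinj _)] at hcount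
  have hsplit := Finset.card_filter_add_card_filter_not (s := Finset.univ)
    fun p => N ≤ Fintype.card (V p)
  simp only [finrank_prod, finrank_self, finrank_fintype_fun_eq_card, Fintype.card_subtype] at hrank
  simp only [not_le, Finset.card_univ] at hsplit
  omega

end CompleteMultipartite

open scoped Classical in
theorem positive_seidel_eigenvalues_bounds_general (m : ℕ) (n : Fin (m + 1) → ℕ)
    (hna : Antitone n) (hn : ∀ i, 1 ≤ n i)
    (hS : (seidelMatrix (completeMultipartiteGraph fun i => Fin (n i))).IsHermitian)
    (lam : Fin m → ℝ) (hlam : Antitone lam)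
    (henum : Multiset.filter (fun x => 0 < x)
        (Finset.univ.val.map hS.eigenvalues) = Finset.univ.val.map lam) :
    ∀ i : Fin m, 2 * (n i.succ : ℝ) - 1 ≤ lam i ∧ lam i ≤ 2 * (n i.castSucc : ℝ) - 1 := by
  intro i
  have : ∀ p, Nonempty (Fin (n p)) := fun p => ⟨⟨0, hn p⟩⟩
  have hthreshold : ∀ p x, 2 * (n p : ℝ) - 1 ≤ x → 0 < x := fun p x hx => by
    have : (1 : ℝ) ≤ n p := by exact_mod_cast hn p
    linarith
  constructor
  · apply hlam.le_apply_of_lt_card_filter_le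
    rw [← card_filter_comp_eq_of_filter_map_eq henum _ (hthreshold i.succ)]
    have hparts := card_le_card_seidelMatrix_completeMultipartiteGraph_eigenvalues_ge_add_one hS
      (n i.succ)
    simp only [Fintype.card_fin] at hparts
    have := hna.lt_card_filter_apply_le i.succ
    simp only [Fin.val_succ] at this
    omega
  · apply hlam.apply_le_of_card_filter_lt_le
    rw [← card_filter_comp_eq_of_filter_map_eq henum _ fun x hx => hthreshold i.castSucc x hx.le]
    have hparts := card_seidelMatrix_completeMultipartiteGraph_eigenvalues_gt_le hS (n i.castSucc)
    simp only [Fintype.card_fin] at hparts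
    exact hparts.trans (hna.card_filter_apply_lt_le i.castSucc)

open scoped Classical in
/-- **Lemma (interlacing of the positive Seidel eigenvalues).**
Let `n_1 ≥ ⋯ ≥ n_k ≥ 1` (with `k = m + 1` parts) and let `lam 0 ≥ ⋯ ≥ lam (m-1)`
be the positive Seidel eigenvalues (with multiplicity) of `K_{n_1,…,n_k}`.
Then `2 n_{i+1} - 1 ≤ lam i ≤ 2 n_i - 1` for every `i`. -/
theorem positive_seidel_eigenvalues_bounds (m : ℕ) (n : Fin (m + 1) → ℕ)
    (hna : Antitone n) (hn : ∀ i, 1 ≤ n i)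
    (hS : (seidelMatrix (completeMultipartiteGraph fun i => Fin (n i))).IsHermitian)
    (lam : Fin m → ℝ) (hlam : Antitone lam) (hpos : ∀ i, 0 < lam i)
    (henum : Multiset.filter (fun x => 0 < x)
        (Finset.univ.val.map hS.eigenvalues) = Finset.univ.val.map lam) :
    ∀ i : Fin m, 2 * (n i.succ : ℝ) - 1 ≤ lam i ∧ lam i ≤ 2 * (n i.castSucc : ℝ) - 1 :=
  positive_seidel_eigenvalues_bounds_general m n hna hn hS lam hlam henum
end
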